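/- Let φ : [0,1]^m → [0,1]^m be Lipschitz with partial Lipschitz constants L_φ^{(l)} (i.e., ‖φ(x) − φ(y)‖ ≤ L_φ^{(l)} |x_l − y_l| whenever x and y differ only in the l-th coordinate), and let f : [0,1]^m → ℝ be continuous. Then sup_{x∈[0,1]^m} |B_𝐧(f∘φ; x) − f(φ(x))| ≤ (3/2) ∑_{l=1}^m Ω_f(L_φ^{(l)}/√(n_l)). -/

import Mathlib

/-!
Write `B_𝐧(f ∘ φ; x) - f (φ x)` as the average of `f (φ (k / 𝐧)) - f (φ x)` against the product
Bernstein weights. Changing the coordinates of `x` into those of `k / 𝐧` one at a time bounds each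
difference by `∑ l, Ω_f (L_l |k_l / n_l - x_l|)`, and the average of the `l`-th summand is a
univariate Bernstein average. There `Ω_f (λ δ) ≤ (1 + λ) Ω_f δ` (chop a segment into `⌊λ⌋ + 1`
pieces) reduces it to the first absolute moment `∑ |k/n - x| b_{n,k}(x)`, which Cauchy–Schwarz and
the variance `x (1 - x) / n ≤ 1 / (4 n)` bound by `1 / (2 √n)`; at `δ = L_l / √n_l` this gives
`(1 + 1/2) Ω_f δ`.
-/

noncomputable def bern (n k : ℕ) (x : ℝ) : ℝ :=
  (n.choose k : ℝ) * x ^ k * (1 - x) ^ (n - k)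

noncomputable def bernOpM (m : ℕ) (n : Fin m → ℕ) (f : (Fin m → ℝ) → ℝ) (x : Fin m → ℝ) : ℝ :=
  ∑ k : (∀ l : Fin m, Fin (n l + 1)),
    f (fun l => (k l : ℝ) / (n l : ℝ)) * ∏ l : Fin m, bern (n l) (k l) (x l)

noncomputable def eudist {m : ℕ} (x y : Fin m → ℝ) : ℝ :=
  Real.sqrt (∑ l : Fin m, (x l - y l) ^ 2)

noncomputable def modContM (m : ℕ) (f : (Fin m → ℝ) → ℝ) (δ : ℝ) : ℝ :=
  sSup {r : ℝ | ∃ x ∈ Set.Icc (0 : Fin m → ℝ) 1, ∃ y ∈ Set.Icc (0 : Fin m → ℝ) 1,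
    eudist x y ≤ δ ∧ r = |f x - f y|}

section Bernstein

variable {n : ℕ} {x : ℝ}

lemma bern_nonneg (k : ℕ) (hx : x ∈ Set.Icc (0 : ℝ) 1) : 0 ≤ bern n k x :=
  mul_nonneg (mul_nonneg (Nat.cast_nonneg _) (pow_nonneg hx.1 _))
    (pow_nonneg (sub_nonneg.mpr hx.2) _)

lemma bern_eq_bernstein (k : ℕ) (hx : x ∈ Set.Icc (0 : ℝ) 1) :
    bern n k x = bernstein n k ⟨x, hx⟩ := by
  rw [bernstein_apply]; rfl

lemma sum_bern (hx : x ∈ Set.Icc (0 : ℝ) 1) : ∑ k : Fin (n + 1), bern n k x = 1 := by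
  simp only [bern_eq_bernstein _ hx, bernstein.probability]

lemma sum_sq_sub_mul_bern (hn : n ≠ 0) (hx : x ∈ Set.Icc (0 : ℝ) 1) :
    ∑ k : Fin (n + 1), ((k : ℝ) / n - x) ^ 2 * bern n k x = x * (1 - x) / n := by
  rw [← bernstein.variance hn ⟨x, hx⟩]
  refine Finset.sum_congr rfl fun k _ => ?_
  rw [bern_eq_bernstein _ hx, bernstein.z, ← neg_sub, neg_sq]

lemma sum_abs_sub_mul_bern_le (hn : n ≠ 0) (hx : x ∈ Set.Icc (0 : ℝ) 1) :
    ∑ k : Fin (n + 1), |(k : ℝ) / n - x| * bern n k x ≤ 1 / (2 * Real.sqrt n) := by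
  have hn0 : (0 : ℝ) < n := by positivity
  set T := ∑ k : Fin (n + 1), |(k : ℝ) / n - x| * bern n k x
  have hT : T ^ 2 ≤ 1 / (4 * n) := by
    calc T ^ 2 ≤ (∑ k : Fin (n + 1), ((k : ℝ) / n - x) ^ 2 * bern n k x) *
          ∑ k : Fin (n + 1), bern n k x :=
          Finset.sum_sq_le_sum_mul_sum_of_sq_le_mul _
            (fun k _ => mul_nonneg (sq_nonneg _) (bern_nonneg k hx))
            (fun k _ => bern_nonneg k hx) fun k _ => (by rw [mul_pow, sq_abs]; ring : _ = _).le
      _ = x * (1 - x) / n := by rw [sum_sq_sub_mul_bern hn hx, sum_bern hx, mul_one]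
      _ ≤ 1 / (4 * n) := by
          rw [div_le_div_iff₀ hn0 (by positivity)]
          nlinarith [sq_nonneg (2 * x - 1)]
  have hT0 : 0 ≤ T := Finset.sum_nonneg fun k _ => mul_nonneg (abs_nonneg _) (bern_nonneg k hx)
  calc T = Real.sqrt (T ^ 2) := (Real.sqrt_sq hT0).symm
    _ ≤ Real.sqrt (1 / (4 * n)) := Real.sqrt_le_sqrt hT
    _ = 1 / (2 * Real.sqrt n) := by
        rw [Real.sqrt_div' _ (by positivity), Real.sqrt_mul' _ hn0.le, Real.sqrt_one]
        norm_num

end Bernstein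

lemma eudist_self {m : ℕ} (x : Fin m → ℝ) : eudist x x = 0 := by simp [eudist]

lemma eudist_eq_abs_mul {m : ℕ} {x y u v : Fin m → ℝ} (c : ℝ)
    (h : ∀ l, u l - v l = c * (x l - y l)) : eudist u v = |c| * eudist x y := by
  simp only [eudist, h, mul_pow, ← Finset.mul_sum]
  rw [Real.sqrt_mul (sq_nonneg c), Real.sqrt_sq_eq_abs]

section ModulusOfContinuity

variable {m : ℕ} {f : (Fin m → ℝ) → ℝ}

lemma bddAbove_modContM_set (hf : ContinuousOn f (Set.Icc 0 1)) (δ : ℝ) :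
    BddAbove {r : ℝ | ∃ x ∈ Set.Icc (0 : Fin m → ℝ) 1, ∃ y ∈ Set.Icc (0 : Fin m → ℝ) 1,
      eudist x y ≤ δ ∧ r = |f x - f y|} := by
  obtain ⟨M, hM⟩ := isCompact_Icc.exists_bound_of_continuousOn hf
  refine ⟨M + M, ?_⟩
  rintro r ⟨x, hx, y, hy, -, rfl⟩
  exact (abs_sub _ _).trans (add_le_add (hM x hx) (hM y hy))

lemma abs_sub_le_modContM (hf : ContinuousOn f (Set.Icc 0 1)) {δ : ℝ} {x y : Fin m → ℝ}
    (hx : x ∈ Set.Icc 0 1) (hy : y ∈ Set.Icc 0 1) (hxy : eudist x y ≤ δ) :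
    |f x - f y| ≤ modContM m f δ :=
  le_csSup (bddAbove_modContM_set hf δ) ⟨x, hx, y, hy, hxy, rfl⟩

lemma modContM_nonneg (hf : ContinuousOn f (Set.Icc 0 1)) {δ : ℝ} (hδ : 0 ≤ δ) :
    0 ≤ modContM m f δ := by
  simpa using abs_sub_le_modContM hf (x := 0) (y := 0) ⟨le_rfl, zero_le_one⟩
    ⟨le_rfl, zero_le_one⟩ (by rwa [eudist_self])

lemma modContM_le_of_forall {δ C : ℝ} (hδ : 0 ≤ δ)
    (h : ∀ x ∈ Set.Icc (0 : Fin m → ℝ) 1, ∀ y ∈ Set.Icc (0 : Fin m → ℝ) 1,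
      eudist x y ≤ δ → |f x - f y| ≤ C) :
    modContM m f δ ≤ C := by
  refine csSup_le ⟨0, 0, ⟨le_rfl, zero_le_one⟩, 0, ⟨le_rfl, zero_le_one⟩, ?_, by simp⟩ ?_
  · rwa [eudist_self]
  · rintro r ⟨x, hx, y, hy, hxy, rfl⟩
    exact h x hx y hy hxy

lemma abs_sub_le_nat_mul_modContM (hf : ContinuousOn f (Set.Icc 0 1)) {δ : ℝ} {N : ℕ}
    (hN : 0 < N) {x y : Fin m → ℝ} (hx : x ∈ Set.Icc 0 1) (hy : y ∈ Set.Icc 0 1)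
    (hxy : eudist x y ≤ N * δ) :
    |f x - f y| ≤ N * modContM m f δ := by
  have hN0 : (0 : ℝ) < N := by exact_mod_cast hN
  set p : ℕ → Fin m → ℝ := fun i => x + ((i : ℝ) / N) • (y - x)
  have hp_mem : ∀ i ≤ N, p i ∈ Set.Icc 0 1 := fun i hi =>
    (convex_Icc 0 1).add_smul_sub_mem hx hy
      ⟨by positivity, (div_le_one hN0).mpr (by exact_mod_cast hi)⟩
  have hp_step : ∀ i, eudist (p i) (p (i + 1)) ≤ δ := by
    intro i
    rw [eudist_eq_abs_mul (1 / N : ℝ) (x := x) (y := y) fun l => by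
      simp only [p, Pi.add_apply, Pi.smul_apply, Pi.sub_apply, smul_eq_mul]; push_cast; ring]
    rw [abs_of_pos (by positivity), one_div_mul_eq_div, div_le_iff₀' hN0]
    exact hxy
  calc |f x - f y| = dist (f (p 0)) (f (p N)) := by
        simp [p, hN0.ne', Real.dist_eq]
    _ ≤ ∑ i ∈ Finset.range N, dist (f (p i)) (f (p (i + 1))) :=
        dist_le_range_sum_dist (fun i => f (p i)) N
    _ ≤ ∑ _i ∈ Finset.range N, modContM m f δ := Finset.sum_le_sum fun i hi => by
        have hi := Finset.mem_range.mp hi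
        exact abs_sub_le_modContM hf (hp_mem i hi.le) (hp_mem (i + 1) hi) (hp_step i)
    _ = N * modContM m f δ := by simp

lemma modContM_mul_le (hf : ContinuousOn f (Set.Icc 0 1)) {lam δ : ℝ} (hlam : 0 ≤ lam)
    (hδ : 0 ≤ δ) : modContM m f (lam * δ) ≤ (1 + lam) * modContM m f δ := by
  refine modContM_le_of_forall (mul_nonneg hlam hδ) fun x hx y hy hxy => ?_
  set N := ⌊lam⌋₊ + 1
  have hN : (N : ℝ) ≤ 1 + lam := by
    simp only [N, Nat.cast_add, Nat.cast_one]; linarith [Nat.floor_le hlam]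
  calc |f x - f y| ≤ N * modContM m f δ :=
        abs_sub_le_nat_mul_modContM hf ⌊lam⌋₊.succ_pos hx hy <|
          hxy.trans <| mul_le_mul_of_nonneg_right
            (by exact_mod_cast (Nat.lt_floor_add_one lam).le) hδ
    _ ≤ (1 + lam) * modContM m f δ := mul_le_mul_of_nonneg_right hN (modContM_nonneg hf hδ)

end ModulusOfContinuity

lemma sum_mul_bern_le_of_mul_le {n : ℕ} (hn : n ≠ 0) {x : ℝ} (hx : x ∈ Set.Icc (0 : ℝ) 1)
    {ω : ℝ → ℝ} {L : ℝ} (hω0 : 0 ≤ ω (L / Real.sqrt n))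
    (hω : ∀ lam, 0 ≤ lam → ω (lam * (L / Real.sqrt n)) ≤ (1 + lam) * ω (L / Real.sqrt n)) :
    ∑ k : Fin (n + 1), ω (L * |(k : ℝ) / n - x|) * bern n k x
      ≤ 3 / 2 * ω (L / Real.sqrt n) := by
  have hs : 0 < Real.sqrt n := Real.sqrt_pos.mpr (by positivity)
  set δ := L / Real.sqrt n
  calc ∑ k : Fin (n + 1), ω (L * |(k : ℝ) / n - x|) * bern n k x
      ≤ ∑ k : Fin (n + 1),
          (bern n k x + Real.sqrt n * (|(k : ℝ) / n - x| * bern n k x)) * ω δ := by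
        refine Finset.sum_le_sum fun k _ => ?_
        have hscale : L * |(k : ℝ) / n - x| = (Real.sqrt n * |(k : ℝ) / n - x|) * δ := by
          rw [mul_comm (Real.sqrt n), mul_assoc, mul_div_cancel₀ L hs.ne', mul_comm]
        rw [hscale]
        calc ω (Real.sqrt n * |(k : ℝ) / n - x| * δ) * bern n k x
            ≤ (1 + Real.sqrt n * |(k : ℝ) / n - x|) * ω δ * bern n k x :=
              mul_le_mul_of_nonneg_right (hω _ (by positivity)) (bern_nonneg k hx)
          _ = _ := by ring
    _ = (1 + Real.sqrt n * ∑ k : Fin (n + 1), |(k : ℝ) / n - x| * bern n k x) * ω δ := by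
        rw [← Finset.sum_mul, Finset.sum_add_distrib, ← Finset.mul_sum, sum_bern hx]
    _ ≤ 3 / 2 * ω δ := by
        refine mul_le_mul_of_nonneg_right ?_ hω0
        have hhalf : Real.sqrt n * (1 / (2 * Real.sqrt n)) = 1 / 2 := by field_simp
        nlinarith [mul_le_mul_of_nonneg_left (sum_abs_sub_mul_bern_le hn hx) hs.le]

section Coordinates

variable {ι : Type*} [Fintype ι] [DecidableEq ι]

lemma sum_mul_prod_of_sum_eq_one {κ : ι → Type*} [∀ i, Fintype (κ i)] (w : ∀ i, κ i → ℝ)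
    (l : ι) (hw : ∀ i, i ≠ l → ∑ a, w i a = 1) (F : κ l → ℝ) :
    ∑ k : (∀ i, κ i), F (k l) * ∏ i, w i (k i) = ∑ a, F a * w l a := by
  set H : ∀ i, κ i → ℝ := Function.update w l fun a => F a * w l a
  have hH : ∀ k : (∀ i, κ i), F (k l) * ∏ i, w i (k i) = ∏ i, H i (k i) := by
    intro k
    rw [← Finset.mul_prod_erase _ (fun i => H i (k i)) (Finset.mem_univ l),
      ← Finset.mul_prod_erase _ (fun i => w i (k i)) (Finset.mem_univ l), ← mul_assoc]
    congr 1
    · simp [H]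
    · exact Finset.prod_congr rfl fun i hi => by simp [H, Finset.ne_of_mem_erase hi]
  rw [Finset.sum_congr rfl fun k _ => hH k, ← Fintype.prod_sum,
    Fintype.prod_eq_single l fun i hi => by simpa [H, hi] using hw i hi]
  simp [H]

lemma abs_sub_le_sum_of_coordinatewise {a b : ι → ℝ} {g : (ι → ℝ) → ℝ} {ω : ι → ℝ → ℝ}
    (h : ∀ l, ∀ x ∈ Set.Icc a b, ∀ y ∈ Set.Icc a b, (∀ j, j ≠ l → x j = y j) →
      |g x - g y| ≤ ω l |x l - y l|)
    {u v : ι → ℝ} (hu : u ∈ Set.Icc a b) (hv : v ∈ Set.Icc a b) :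
    |g u - g v| ≤ ∑ l, ω l |u l - v l| := by
  have hmem : ∀ s : Finset ι, s.piecewise v u ∈ Set.Icc a b := fun s => by
    rw [← Finset.piecewise_coe]
    exact Set.piecewise_mem_Icc (fun i _ => ⟨hv.1 i, hv.2 i⟩) fun i _ => ⟨hu.1 i, hu.2 i⟩
  suffices ∀ s : Finset ι, |g (s.piecewise v u) - g u| ≤ ∑ l ∈ s, ω l |u l - v l| by
    simpa [abs_sub_comm] using this Finset.univ
  intro s
  induction s using Finset.induction_on with
  | empty => simp
  | insert j s hj ih =>
    have hmem_insert := hmem (insert j s)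
    rw [Finset.piecewise_insert] at hmem_insert ⊢
    have hstep := h j _ hmem_insert _ (hmem s) fun i hi => Function.update_of_ne hi _ _
    rw [Function.update_self, Finset.piecewise_eq_of_notMem _ _ _ hj, abs_sub_comm (v j)]
      at hstep
    rw [Finset.sum_insert hj]
    exact (abs_sub_le _ _ _).trans (add_le_add hstep ih)

end Coordinates

section BernsteinOperator

variable {m : ℕ} {n : Fin m → ℕ}

lemma node_mem_Icc (k : ∀ l, Fin (n l + 1)) :
    (fun l => (k l : ℝ) / n l) ∈ Set.Icc (0 : Fin m → ℝ) 1 :=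
  ⟨fun l => by positivity,
    fun l => div_le_one_of_le₀ (Nat.cast_le.mpr (k l).is_le) (by positivity)⟩

lemma abs_bernOpM_sub_le {g : (Fin m → ℝ) → ℝ} {x : Fin m → ℝ} (hx : x ∈ Set.Icc 0 1)
    {G : ∀ l, Fin (n l + 1) → ℝ}
    (hG : ∀ k : (∀ l, Fin (n l + 1)), |g (fun l => (k l : ℝ) / n l) - g x| ≤ ∑ l, G l (k l)) :
    |bernOpM m n g x - g x| ≤ ∑ l, ∑ a, G l a * bern (n l) a (x l) := by
  have hxl : ∀ l, x l ∈ Set.Icc (0 : ℝ) 1 := fun l => ⟨hx.1 l, hx.2 l⟩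
  set w : (∀ l, Fin (n l + 1)) → ℝ := fun k => ∏ l, bern (n l) (k l) (x l)
  have hw0 : ∀ k, 0 ≤ w k := fun k => Finset.prod_nonneg fun l _ => bern_nonneg _ (hxl l)
  have hw1 : ∑ k, w k = 1 := by
    rw [← Fintype.prod_sum fun l (a : Fin (n l + 1)) => bern (n l) a (x l)]
    exact Finset.prod_eq_one fun l _ => sum_bern (hxl l)
  calc |bernOpM m n g x - g x|
      = |∑ k, (g (fun l => (k l : ℝ) / n l) - g x) * w k| := by
        simp only [bernOpM, sub_mul, Finset.sum_sub_distrib, ← Finset.mul_sum, hw1, mul_one, w]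
    _ ≤ ∑ k, |g (fun l => (k l : ℝ) / n l) - g x| * w k := by
        refine (Finset.abs_sum_le_sum_abs _ _).trans_eq (Finset.sum_congr rfl fun k _ => ?_)
        rw [abs_mul, abs_of_nonneg (hw0 k)]
    _ ≤ ∑ k, (∑ l, G l (k l)) * w k :=
        Finset.sum_le_sum fun k _ => mul_le_mul_of_nonneg_right (hG k) (hw0 k)
    _ = ∑ l, ∑ a, G l a * bern (n l) a (x l) := by
        simp only [Finset.sum_mul]
        rw [Finset.sum_comm]
        exact Finset.sum_congr rfl fun l _ => sum_mul_prod_of_sum_eq_one _ l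
          (fun i _ => sum_bern (hxl i)) (G l)

end BernsteinOperator

lemma nonneg_of_eudist_le_mul_abs_sub {m : ℕ} {φ : (Fin m → ℝ) → Fin m → ℝ} {l : Fin m} {L : ℝ}
    (h : ∀ x ∈ Set.Icc (0 : Fin m → ℝ) 1, ∀ y ∈ Set.Icc (0 : Fin m → ℝ) 1,
      (∀ j, j ≠ l → x j = y j) → eudist (φ x) (φ y) ≤ L * |x l - y l|) :
    0 ≤ L := by
  have hsingle : Pi.single l (1 : ℝ) ∈ Set.Icc (0 : Fin m → ℝ) 1 :=
    ⟨Pi.single_nonneg.mpr zero_le_one, fun j => by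
      rcases eq_or_ne j l with rfl | hj <;> simp [*]⟩
  have := h 0 ⟨le_rfl, zero_le_one⟩ _ hsingle fun j hj => by simp [hj]
  simp only [Pi.zero_apply, Pi.single_eq_same, zero_sub, abs_neg, abs_one, mul_one] at this
  exact (Real.sqrt_nonneg _).trans this

theorem stmt16 (m : ℕ) (n : Fin m → ℕ) (hn : ∀ l, 1 ≤ n l)
    (φ : (Fin m → ℝ) → (Fin m → ℝ))
    (hφmap : Set.MapsTo φ (Set.Icc (0 : Fin m → ℝ) 1) (Set.Icc (0 : Fin m → ℝ) 1))
    (Lp : Fin m → ℝ)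
    (hLp : ∀ l : Fin m, ∀ x ∈ Set.Icc (0 : Fin m → ℝ) 1, ∀ y ∈ Set.Icc (0 : Fin m → ℝ) 1,
      (∀ j : Fin m, j ≠ l → x j = y j) → eudist (φ x) (φ y) ≤ Lp l * |x l - y l|)
    (f : (Fin m → ℝ) → ℝ)
    (hf : ContinuousOn f (Set.Icc (0 : Fin m → ℝ) 1)) :
    (⨆ x : Set.Icc (0 : Fin m → ℝ) 1, |bernOpM m n (f ∘ φ) x - f (φ x)|)
      ≤ (3 / 2) * ∑ l : Fin m, modContM m f (Lp l / Real.sqrt (n l : ℝ)) := by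
  have : Nonempty (Set.Icc (0 : Fin m → ℝ) 1) := ⟨0, le_rfl, zero_le_one⟩
  refine ciSup_le fun ⟨x, hx⟩ => ?_
  have hstep : ∀ l, ∀ u ∈ Set.Icc (0 : Fin m → ℝ) 1, ∀ v ∈ Set.Icc (0 : Fin m → ℝ) 1,
      (∀ j, j ≠ l → u j = v j) → |(f ∘ φ) u - (f ∘ φ) v| ≤ modContM m f (Lp l * |u l - v l|) :=
    fun l u hu v hv huv => abs_sub_le_modContM hf (hφmap hu) (hφmap hv) (hLp l u hu v hv huv)
  calc |bernOpM m n (f ∘ φ) x - (f ∘ φ) x|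
      ≤ ∑ l, ∑ a : Fin (n l + 1),
          modContM m f (Lp l * |(a : ℝ) / n l - x l|) * bern (n l) a (x l) :=
        abs_bernOpM_sub_le hx fun k => abs_sub_le_sum_of_coordinatewise
          (ω := fun l t => modContM m f (Lp l * t)) hstep
          (node_mem_Icc k) hx
    _ ≤ ∑ l, 3 / 2 * modContM m f (Lp l / Real.sqrt (n l)) :=
        Finset.sum_le_sum fun l _ =>
          have hδ := div_nonneg (nonneg_of_eudist_le_mul_abs_sub (hLp l)) (Real.sqrt_nonneg (n l))
          sum_mul_bern_le_of_mul_le (Nat.one_le_iff_ne_zero.mp (hn l)) ⟨hx.1 l, hx.2 l⟩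
            (modContM_nonneg hf hδ) fun _ hlam => modContM_mul_le hf hlam hδ
    _ = 3 / 2 * ∑ l, modContM m f (Lp l / Real.sqrt (n l)) := (Finset.mul_sum _ _ _).symm
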